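/- arXiv:2106.15362 — 2 statements merged into one kernel-verified Lean document; each statement's English description precedes it below -/
import Mathlib

section
/- Let G be a simple graph with no isolated vertices, maximum degree Δ and minimum degree δ, let p ≠ 0 be a real number, let ξ_1 be the largest eigenvalue of the p-Sombor matrix S_p(G) and μ_1 the largest eigenvalue of the adjacency matrix A(G). Then 2^{1/p} δ μ_1 ≤ ξ_1 ≤ 2^{1/p} Δ μ_1, with equality in either bound if G is a regular graph. -/
open Finset

/-- The `p`-Sombor matrix of a simple graph `G` on vertices `{0, …, n-1}`:
its `(i,j)` entry is `((d i)^p + (d j)^p)^(1/p)` when `i ~ j`, and `0` otherwise. -/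
noncomputable def somborMatrix (n : ℕ) (G : SimpleGraph (Fin n)) [DecidableRel G.Adj]
    (p : ℝ) : Matrix (Fin n) (Fin n) ℝ :=
  Matrix.of fun i j =>
    if G.Adj i j then ((G.degree i : ℝ) ^ p + (G.degree j : ℝ) ^ p) ^ (1 / p) else 0

/-- Sum of a symmetric weight `f` over the edges of `G`
(each unordered edge counted once). -/
noncomputable def edgeSum (n : ℕ) (G : SimpleGraph (Fin n)) [DecidableRel G.Adj]
    (f : Fin n → Fin n → ℝ) : ℝ :=
  (1 / 2) * ∑ i, ∑ j, if G.Adj i j then f i j else 0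

/-- The `p`-Sombor index `SO_p(G) = ∑_{ij ∈ E(G)} ((d i)^p + (d j)^p)^(1/p)`. -/
noncomputable def somborIndex (n : ℕ) (G : SimpleGraph (Fin n)) [DecidableRel G.Adj]
    (p : ℝ) : ℝ :=
  edgeSum n G fun i j => ((G.degree i : ℝ) ^ p + (G.degree j : ℝ) ^ p) ^ (1 / p)

/-!
Entrywise `2^(1/p) δ A ≤ S_p ≤ 2^(1/p) Δ A`, because `((d_i)^p + (d_j)^p)^(1/p)` is monotone in
both degrees and equals `2^(1/p) d` when both are `d`. These bounds pass to top eigenvalues since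
both matrices are nonnegative: replacing a unit eigenvector by its entrywise absolute value does
not decrease the quadratic form, at a nonnegative vector the quadratic form is monotone in the
entries, and at a unit vector it is bounded by the top eigenvalue. For a regular graph `δ = Δ`.
-/

open Matrix

section QuadraticForm

variable {ι : Type*} [Fintype ι]

theorem Matrix.IsHermitian.dotProduct_mulVec_le [DecidableEq ι] {M : Matrix ι ι ℝ}
    (hM : M.IsHermitian) {ξ : ℝ} (hξ : ∀ i, hM.eigenvalues i ≤ ξ) (x : ι → ℝ) :
    x ⬝ᵥ M *ᵥ x ≤ ξ * (x ⬝ᵥ x) := by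
  have hpsd : (algebraMap ℝ _ ξ - M).PosSemidef := by
    refine posSemidef_iff_isHermitian_and_spectrum_nonneg.mpr
      ⟨(IsSelfAdjoint.algebraMap _ (.all ξ)).sub hM, ?_⟩
    rw [← spectrum.singleton_sub_eq, hM.spectrum_real_eq_range_eigenvalues]
    rintro _ ⟨_, rfl, _, ⟨i, rfl⟩, rfl⟩
    simpa using hξ i
  simpa [Algebra.algebraMap_eq_smul_one, sub_mulVec, smul_mulVec, dotProduct_sub] using
    hpsd.re_dotProduct_nonneg x

theorem Matrix.IsHermitian.eigenvalues_eq_dotProduct_mulVec [DecidableEq ι] {M : Matrix ι ι ℝ}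
    (hM : M.IsHermitian) (i : ι) :
    hM.eigenvalues i = ⇑(hM.eigenvectorBasis i) ⬝ᵥ M *ᵥ ⇑(hM.eigenvectorBasis i) := by
  simpa using hM.eigenvalues_eq i

theorem Matrix.IsHermitian.dotProduct_eigenvectorBasis_self [DecidableEq ι] {M : Matrix ι ι ℝ}
    (hM : M.IsHermitian) (i : ι) :
    ⇑(hM.eigenvectorBasis i) ⬝ᵥ ⇑(hM.eigenvectorBasis i) = 1 := by
  have h := real_inner_self_eq_norm_sq (hM.eigenvectorBasis i)
  rw [hM.eigenvectorBasis.orthonormal.1 i, EuclideanSpace.inner_eq_star_dotProduct] at h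
  simpa [dotProduct_comm] using h

theorem dotProduct_mulVec_le_abs {M : Matrix ι ι ℝ} (hM : ∀ i j, 0 ≤ M i j) (x : ι → ℝ) :
    x ⬝ᵥ M *ᵥ x ≤ |x| ⬝ᵥ M *ᵥ |x| := by
  simp only [dotProduct, mulVec, Finset.mul_sum, Pi.abs_apply]
  refine Finset.sum_le_sum fun i _ => Finset.sum_le_sum fun j _ => ?_
  calc x i * (M i j * x j) ≤ |x i * (M i j * x j)| := le_abs_self _
    _ = |x i| * (M i j * |x j|) := by rw [abs_mul, abs_mul, abs_of_nonneg (hM i j)]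

theorem dotProduct_mulVec_mono {M N : Matrix ι ι ℝ} (hMN : ∀ i j, M i j ≤ N i j) {x : ι → ℝ}
    (hx : 0 ≤ x) : x ⬝ᵥ M *ᵥ x ≤ x ⬝ᵥ N *ᵥ x :=
  dotProduct_le_dotProduct_of_nonneg_left
    (fun i => dotProduct_le_dotProduct_of_nonneg_right (hMN i) hx) hx

theorem Matrix.IsHermitian.exists_nonneg_eigenvalues_le_dotProduct_mulVec [DecidableEq ι]
    {M : Matrix ι ι ℝ} (hM : M.IsHermitian) (hM₀ : ∀ i j, 0 ≤ M i j) (i : ι) :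
    ∃ w : ι → ℝ, 0 ≤ w ∧ w ⬝ᵥ w = 1 ∧ hM.eigenvalues i ≤ w ⬝ᵥ M *ᵥ w := by
  set v : ι → ℝ := ⇑(hM.eigenvectorBasis i)
  refine ⟨|v|, abs_nonneg v, ?_, ?_⟩
  · simpa [dotProduct, abs_mul_abs_self] using hM.dotProduct_eigenvectorBasis_self i
  · exact (hM.eigenvalues_eq_dotProduct_mulVec i).trans_le (dotProduct_mulVec_le_abs hM₀ v)

theorem Matrix.IsHermitian.mul_eigenvalues_le_of_mul_le [DecidableEq ι] {M N : Matrix ι ι ℝ}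
    (hM : M.IsHermitian) (hN : N.IsHermitian) (hM₀ : ∀ i j, 0 ≤ M i j) {a b μ : ℝ}
    (ha : 0 ≤ a) (hb : 0 ≤ b) (hMN : ∀ i j, a * M i j ≤ b * N i j)
    (hμ : ∀ i, hN.eigenvalues i ≤ μ) (i : ι) : a * hM.eigenvalues i ≤ b * μ := by
  obtain ⟨w, hw₀, hw₁, hv⟩ := hM.exists_nonneg_eigenvalues_le_dotProduct_mulVec hM₀ i
  calc a * hM.eigenvalues i ≤ a * (w ⬝ᵥ M *ᵥ w) := mul_le_mul_of_nonneg_left hv ha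
    _ = w ⬝ᵥ (a • M) *ᵥ w := by rw [smul_mulVec, dotProduct_smul, smul_eq_mul]
    _ ≤ w ⬝ᵥ (b • N) *ᵥ w := dotProduct_mulVec_mono (by simpa using hMN) hw₀
    _ = b * (w ⬝ᵥ N *ᵥ w) := by rw [smul_mulVec, dotProduct_smul, smul_eq_mul]
    _ ≤ b * μ := by
        simpa [hw₁] using mul_le_mul_of_nonneg_left (hN.dotProduct_mulVec_le hμ w) hb

end QuadraticForm

section PowerMean

variable {p : ℝ}

theorem rpow_add_rpow_rpow_one_div_self (hp : p ≠ 0) {t : ℝ} (ht : 0 ≤ t) :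
    (t ^ p + t ^ p) ^ (1 / p) = 2 ^ (1 / p) * t := by
  rw [← two_mul, Real.mul_rpow zero_le_two (Real.rpow_nonneg ht p), ← Real.rpow_mul ht,
    mul_one_div_cancel hp, Real.rpow_one]

theorem rpow_add_rpow_rpow_one_div_le (hp : p ≠ 0) {a b a' b' : ℝ} (ha : 0 < a) (hb : 0 < b)
    (haa' : a ≤ a') (hbb' : b ≤ b') :
    (a ^ p + b ^ p) ^ (1 / p) ≤ (a' ^ p + b' ^ p) ^ (1 / p) := by
  rcases hp.lt_or_gt with hp | hp
  · have ha' := ha.trans_le haa'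
    have hb' := hb.trans_le hbb'
    refine Real.rpow_le_rpow_of_nonpos (by positivity) ?_ (one_div_neg.mpr hp).le
    exact add_le_add (Real.rpow_le_rpow_of_nonpos ha haa' hp.le)
      (Real.rpow_le_rpow_of_nonpos hb hbb' hp.le)
  · refine Real.rpow_le_rpow (by positivity) ?_ (one_div_pos.mpr hp).le
    gcongr

end PowerMean

section SomborMatrix

variable {n : ℕ} (G : SimpleGraph (Fin n)) [DecidableRel G.Adj] {p : ℝ}

theorem somborMatrix_apply_of_adj {i j : Fin n} (h : G.Adj i j) :
    somborMatrix n G p i j = ((G.degree i : ℝ) ^ p + (G.degree j : ℝ) ^ p) ^ (1 / p) := by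
  simp [somborMatrix, h]

theorem somborMatrix_apply_of_not_adj {i j : Fin n} (h : ¬G.Adj i j) :
    somborMatrix n G p i j = 0 := by
  simp [somborMatrix, h]

theorem somborMatrix_nonneg (i j : Fin n) : 0 ≤ somborMatrix n G p i j := by
  by_cases h : G.Adj i j
  · rw [somborMatrix_apply_of_adj G h]
    positivity
  · rw [somborMatrix_apply_of_not_adj G h]

theorem mul_adjMatrix_le_somborMatrix (hp : p ≠ 0) (i j : Fin n) :
    2 ^ (1 / p) * G.minDegree * G.adjMatrix ℝ i j ≤ somborMatrix n G p i j := by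
  by_cases h : G.Adj i j
  · rcases G.minDegree.eq_zero_or_pos with hδ | hδ
    · simpa [hδ] using somborMatrix_nonneg G i j
    rw [somborMatrix_apply_of_adj G h, G.adjMatrix_apply, if_pos h, mul_one,
      ← rpow_add_rpow_rpow_one_div_self hp (Nat.cast_nonneg _)]
    exact rpow_add_rpow_rpow_one_div_le hp (by exact_mod_cast hδ) (by exact_mod_cast hδ)
      (by exact_mod_cast G.minDegree_le_degree i) (by exact_mod_cast G.minDegree_le_degree j)
  · simp [h, somborMatrix_apply_of_not_adj G h]

theorem somborMatrix_le_mul_adjMatrix (hp : p ≠ 0) (i j : Fin n) :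
    somborMatrix n G p i j ≤ 2 ^ (1 / p) * G.maxDegree * G.adjMatrix ℝ i j := by
  by_cases h : G.Adj i j
  · rw [somborMatrix_apply_of_adj G h, G.adjMatrix_apply, if_pos h, mul_one,
      ← rpow_add_rpow_rpow_one_div_self hp (Nat.cast_nonneg _)]
    exact rpow_add_rpow_rpow_one_div_le hp
      (by exact_mod_cast G.degree_pos_iff_exists_adj i |>.mpr ⟨j, h⟩)
      (by exact_mod_cast G.degree_pos_iff_exists_adj j |>.mpr ⟨i, h.symm⟩)
      (by exact_mod_cast G.degree_le_maxDegree i) (by exact_mod_cast G.degree_le_maxDegree j)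
  · simp [h, somborMatrix_apply_of_not_adj G h]

end SomborMatrix

theorem somborMatrix_spectral_radius_vs_adjacency_general (n : ℕ) (G : SimpleGraph (Fin n))
    [DecidableRel G.Adj] (p : ℝ) (hp : p ≠ 0)
    (hS : (somborMatrix n G p).IsHermitian) (hA : (G.adjMatrix ℝ).IsHermitian)
    (ξ₁ μ₁ : ℝ)
    (hξmem : ∃ i, hS.eigenvalues i = ξ₁) (hξmax : ∀ i, hS.eigenvalues i ≤ ξ₁)
    (hμmem : ∃ i, hA.eigenvalues i = μ₁) (hμmax : ∀ i, hA.eigenvalues i ≤ μ₁) :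
    ((2 : ℝ) ^ (1 / p) * (G.minDegree : ℝ) * μ₁ ≤ ξ₁ ∧
        ξ₁ ≤ (2 : ℝ) ^ (1 / p) * (G.maxDegree : ℝ) * μ₁) ∧
      ((∃ k, G.IsRegularOfDegree k) →
        (2 : ℝ) ^ (1 / p) * (G.minDegree : ℝ) * μ₁ = ξ₁ ∧
          ξ₁ = (2 : ℝ) ^ (1 / p) * (G.maxDegree : ℝ) * μ₁) := by
  obtain ⟨i, rfl⟩ := hξmem
  obtain ⟨j, rfl⟩ := hμmem
  have hlower : 2 ^ (1 / p) * G.minDegree * hA.eigenvalues j ≤ hS.eigenvalues i := by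
    simpa using hA.mul_eigenvalues_le_of_mul_le hS (fun k l => ite_nonneg zero_le_one le_rfl)
      (by positivity) zero_le_one
      (fun k l => by simpa using mul_adjMatrix_le_somborMatrix G hp k l) hξmax j
  have hupper : hS.eigenvalues i ≤ 2 ^ (1 / p) * G.maxDegree * hA.eigenvalues j := by
    simpa using hS.mul_eigenvalues_le_of_mul_le hA (somborMatrix_nonneg G) zero_le_one
      (by positivity)
      (fun k l => by simpa [mul_assoc] using somborMatrix_le_mul_adjMatrix G hp k l) hμmax i
  refine ⟨⟨hlower, hupper⟩, fun ⟨k, hk⟩ => ?_⟩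
  have : Nonempty (Fin n) := ⟨i⟩
  rw [hk.minDegree_eq] at hlower ⊢
  rw [hk.maxDegree_eq] at hupper ⊢
  exact ⟨le_antisymm hlower hupper, le_antisymm hupper hlower⟩

/-- If `ξ₁` is the largest eigenvalue of the `p`-Sombor matrix and `μ₁` the
largest eigenvalue of the adjacency matrix, then `2^(1/p) δ μ₁ ≤ ξ₁ ≤ 2^(1/p) Δ μ₁`,
with equality in either bound if `G` is regular. -/
theorem somborMatrix_spectral_radius_vs_adjacency (n : ℕ) (G : SimpleGraph (Fin n))
    [DecidableRel G.Adj] (hdeg : ∀ i : Fin n, 0 < G.degree i) (p : ℝ) (hp : p ≠ 0)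
    (hS : (somborMatrix n G p).IsHermitian) (hA : (G.adjMatrix ℝ).IsHermitian)
    (ξ₁ μ₁ : ℝ)
    (hξmem : ∃ i, hS.eigenvalues i = ξ₁) (hξmax : ∀ i, hS.eigenvalues i ≤ ξ₁)
    (hμmem : ∃ i, hA.eigenvalues i = μ₁) (hμmax : ∀ i, hA.eigenvalues i ≤ μ₁) :
    ((2 : ℝ) ^ (1 / p) * (G.minDegree : ℝ) * μ₁ ≤ ξ₁ ∧
        ξ₁ ≤ (2 : ℝ) ^ (1 / p) * (G.maxDegree : ℝ) * μ₁) ∧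
      ((∃ k, G.IsRegularOfDegree k) →
        (2 : ℝ) ^ (1 / p) * (G.minDegree : ℝ) * μ₁ = ξ₁ ∧
          ξ₁ = (2 : ℝ) ^ (1 / p) * (G.maxDegree : ℝ) * μ₁) :=
  somborMatrix_spectral_radius_vs_adjacency_general n G p hp hS hA ξ₁ μ₁ hξmem hξmax hμmem hμmax
end

section
/- Let G be a simple graph on n vertices with m edges, minimum degree δ ≥ 1 and maximum degree Δ ≤ n − 2, and let p ≠ 0 be a real number. Let ξ_1 be the largest eigenvalue of the p-Sombor matrix S_p(G) and ξ̄_1 the largest eigenvalue of the p-Sombor matrix S_p(Ḡ) of the complement Ḡ of G. Then ξ_1 + ξ̄_1 ≥ (2^{1+1/p} / n) · ( m δ + (n − 1 − Δ)( C(n,2) − m ) ), where C(n,2) = n(n−1)/2. -/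
/-! Evaluate the Rayleigh quotient of `S_p(G)` at the all-ones vector: `n ξ₁` bounds the sum of
all entries, which is twice the sum of the edge weights. Each edge weight is at least
`2^(1/p) δ`, because `((x^p + y^p)/2)^(1/p)` is monotone in `x` and `y` for either sign of `p`.
The same bound for `Ḡ`, whose minimum degree is at least `n - 1 - Δ` and which has
`C(n,2) - m` edges, gives the second summand. -/

open Finset

open Matrix
open scoped MatrixOrder

namespace Matrix.IsHermitian

variable {ι : Type*} [Fintype ι] [DecidableEq ι] {A : Matrix ι ι ℝ} (hA : A.IsHermitian)
  {ξ : ℝ}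

theorem dotProduct_mulVec_le_s19 (hξ : ∀ i, hA.eigenvalues i ≤ ξ) (x : ι → ℝ) :
    x ⬝ᵥ A *ᵥ x ≤ ξ * (x ⬝ᵥ x) := by
  have hle : A ≤ algebraMap ℝ _ ξ := by
    refine le_algebraMap_of_spectrum_le fun r hr => ?_
    rw [hA.spectrum_real_eq_range_eigenvalues] at hr
    obtain ⟨i, rfl⟩ := hr
    exact hξ i
  have := (Matrix.le_iff.mp hle).dotProduct_mulVec_nonneg x
  rw [star_trivial, sub_mulVec, dotProduct_sub, Algebra.algebraMap_eq_smul_one, smul_mulVec,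
    one_mulVec, dotProduct_smul, smul_eq_mul] at this
  linarith

theorem sum_sum_le_card_mul (hξ : ∀ i, hA.eigenvalues i ≤ ξ) :
    ∑ i, ∑ j, A i j ≤ Fintype.card ι * ξ := by
  simpa [one_dotProduct, one_dotProduct_one, mulVec, dotProduct_one, mul_comm]
    using hA.dotProduct_mulVec_le_s19 hξ 1

end Matrix.IsHermitian

namespace SimpleGraph

variable {V : Type*} [Fintype V] (G : SimpleGraph V) [DecidableRel G.Adj]

theorem card_edgeFinset_compl_add_card_edgeFinset [DecidableEq V] :
    #Gᶜ.edgeFinset + #G.edgeFinset = (Fintype.card V).choose 2 := by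
  rw [← card_edgeFinset_top_eq_card_choose_two, ← card_union_of_disjoint
    (disjoint_edgeFinset.mpr disjoint_compl_left)]
  congr 1
  simp [← coe_inj, ← edgeSet_sup]

theorem card_sub_one_sub_maxDegree_le_minDegree_compl [DecidableEq V] [Nonempty V] :
    Fintype.card V - 1 - G.maxDegree ≤ Gᶜ.minDegree := by
  refine le_minDegree_of_forall_le_degree _ _ fun v => ?_
  rw [degree_compl]
  have := G.degree_le_maxDegree v
  omega

end SimpleGraph

theorem two_rpow_one_div_mul_le_rpow_add_rpow {p a x y : ℝ} (hp : p ≠ 0) (ha : 0 ≤ a)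
    (hx : a ≤ x) (hy : a ≤ y) : 2 ^ (1 / p) * a ≤ (x ^ p + y ^ p) ^ (1 / p) := by
  rcases ha.eq_or_lt with rfl | ha
  · rw [mul_zero]
    exact Real.rpow_nonneg (add_nonneg (Real.rpow_nonneg (by linarith) _)
      (Real.rpow_nonneg (by linarith) _)) _
  have h_eq : 2 ^ (1 / p) * a = (a ^ p + a ^ p) ^ (1 / p) := by
    rw [← two_mul, Real.mul_rpow zero_le_two (Real.rpow_nonneg ha.le p), one_div,
      Real.rpow_rpow_inv ha.le hp]
  rw [h_eq]
  rcases hp.lt_or_gt with hp | hp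
  · refine Real.rpow_le_rpow_of_nonpos (add_pos (Real.rpow_pos_of_pos (ha.trans_le hx) p)
      (Real.rpow_pos_of_pos (ha.trans_le hy) p)) ?_ (by simp [hp.le])
    exact add_le_add (Real.rpow_le_rpow_of_nonpos ha hx hp.le)
      (Real.rpow_le_rpow_of_nonpos ha hy hp.le)
  · gcongr

theorem sum_somborMatrix_apply {n : ℕ} (G : SimpleGraph (Fin n)) [DecidableRel G.Adj] (p : ℝ)
    (i : Fin n) :
    ∑ j, somborMatrix n G p i j =
      ∑ j ∈ G.neighborFinset i, ((G.degree i : ℝ) ^ p + (G.degree j : ℝ) ^ p) ^ (1 / p) := by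
  simp [somborMatrix, Finset.sum_ite, SimpleGraph.neighborFinset_eq_filter]

theorem two_rpow_one_div_mul_minDegree_mul_le_sum_sum_somborMatrix {n : ℕ}
    (G : SimpleGraph (Fin n)) [DecidableRel G.Adj] {p : ℝ} (hp : p ≠ 0) :
    (2 : ℝ) ^ (1 / p) * G.minDegree * (2 * #G.edgeFinset) ≤
      ∑ i, ∑ j, somborMatrix n G p i j := by
  have hrow i :
      (G.degree i : ℝ) * (2 ^ (1 / p) * G.minDegree) ≤ ∑ j, somborMatrix n G p i j := by
    rw [sum_somborMatrix_apply, ← G.card_neighborFinset_eq_degree, ← nsmul_eq_mul]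
    refine card_nsmul_le_sum _ _ _ fun j _ => two_rpow_one_div_mul_le_rpow_add_rpow hp
      (Nat.cast_nonneg _) ?_ ?_ <;> exact_mod_cast G.minDegree_le_degree _
  calc (2 : ℝ) ^ (1 / p) * G.minDegree * (2 * #G.edgeFinset)
      = ∑ i, (G.degree i : ℝ) * (2 ^ (1 / p) * G.minDegree) := by
        rw [← sum_mul, ← Nat.cast_sum, G.sum_degrees_eq_twice_card_edges]
        push_cast
        ring
    _ ≤ ∑ i, ∑ j, somborMatrix n G p i j := sum_le_sum fun i _ => hrow i

theorem two_rpow_one_div_mul_minDegree_mul_le_mul_of_eigenvalues_le {n : ℕ}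
    (G : SimpleGraph (Fin n)) [DecidableRel G.Adj] {p : ℝ} (hp : p ≠ 0)
    (hS : (somborMatrix n G p).IsHermitian) {ξ : ℝ} (hξ : ∀ i, hS.eigenvalues i ≤ ξ) :
    (2 : ℝ) ^ (1 / p) * G.minDegree * (2 * #G.edgeFinset) ≤ n * ξ := by
  simpa using (two_rpow_one_div_mul_minDegree_mul_le_sum_sum_somborMatrix G hp).trans
    (hS.sum_sum_le_card_mul hξ)

theorem somborMatrix_nordhaus_gaddum_general (n : ℕ) (G : SimpleGraph (Fin n))
    [DecidableRel G.Adj] (hδ : 1 ≤ G.minDegree)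
    (p : ℝ) (hp : p ≠ 0)
    (hS : (somborMatrix n G p).IsHermitian) (hSc : (somborMatrix n Gᶜ p).IsHermitian)
    (ξ₁ ξc₁ : ℝ)
    (hξmax : ∀ i, hS.eigenvalues i ≤ ξ₁)
    (hξcmax : ∀ i, hSc.eigenvalues i ≤ ξc₁) :
    (2 : ℝ) ^ (1 + 1 / p) / (n : ℝ) *
        ((G.edgeFinset.card : ℝ) * (G.minDegree : ℝ) +
          ((n : ℝ) - 1 - (G.maxDegree : ℝ)) *
            ((n : ℝ) * ((n : ℝ) - 1) / 2 - (G.edgeFinset.card : ℝ))) ≤ ξ₁ + ξc₁ := by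
  have : NeZero n := ⟨by rintro rfl; simp at hδ⟩
  have hG := two_rpow_one_div_mul_minDegree_mul_le_mul_of_eigenvalues_le G hp hS hξmax
  have hGc := two_rpow_one_div_mul_minDegree_mul_le_mul_of_eigenvalues_le Gᶜ hp hSc hξcmax
  have hδc : (n : ℝ) - 1 - G.maxDegree ≤ Gᶜ.minDegree := by
    have hΔ := G.maxDegree_lt_card_verts
    have := G.card_sub_one_sub_maxDegree_le_minDegree_compl
    simp only [Fintype.card_fin] at hΔ this
    rw [← Nat.cast_one, ← Nat.cast_sub (by omega), ← Nat.cast_sub (by omega)]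
    exact_mod_cast this
  have hm : (#Gᶜ.edgeFinset : ℝ) = n * (n - 1) / 2 - #G.edgeFinset := by
    rw [eq_sub_iff_add_eq, ← Nat.cast_add, G.card_edgeFinset_compl_add_card_edgeFinset,
      Fintype.card_fin, Nat.cast_choose_two]
  have hn : (0 : ℝ) < n := by exact_mod_cast (NeZero.pos n)
  rw [Real.rpow_add two_pos, Real.rpow_one, ← hm]
  calc 2 * (2 : ℝ) ^ (1 / p) / n *
        (#G.edgeFinset * G.minDegree + (n - 1 - G.maxDegree) * #Gᶜ.edgeFinset)
      ≤ 2 * 2 ^ (1 / p) / n *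
        (#G.edgeFinset * G.minDegree + Gᶜ.minDegree * #Gᶜ.edgeFinset) := by gcongr
    _ = ((2 : ℝ) ^ (1 / p) * G.minDegree * (2 * #G.edgeFinset)
          + 2 ^ (1 / p) * Gᶜ.minDegree * (2 * #Gᶜ.edgeFinset)) / n := by ring
    _ ≤ (n * ξ₁ + n * ξc₁) / n := by gcongr
    _ = ξ₁ + ξc₁ := by field_simp

/-- For a graph with `m` edges, `δ ≥ 1` and `Δ ≤ n − 2`, if `ξ₁` and `ξ̄₁`
are the largest eigenvalues of `S_p(G)` and `S_p(Ḡ)` respectively, then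
`ξ₁ + ξ̄₁ ≥ (2^(1+1/p)/n) (m δ + (n − 1 − Δ)(n(n−1)/2 − m))`. -/
theorem somborMatrix_nordhaus_gaddum (n : ℕ) (G : SimpleGraph (Fin n))
    [DecidableRel G.Adj] (hδ : 1 ≤ G.minDegree) (hΔ : G.maxDegree ≤ n - 2)
    (p : ℝ) (hp : p ≠ 0)
    (hS : (somborMatrix n G p).IsHermitian) (hSc : (somborMatrix n Gᶜ p).IsHermitian)
    (ξ₁ ξc₁ : ℝ)
    (hξmem : ∃ i, hS.eigenvalues i = ξ₁) (hξmax : ∀ i, hS.eigenvalues i ≤ ξ₁)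
    (hξcmem : ∃ i, hSc.eigenvalues i = ξc₁) (hξcmax : ∀ i, hSc.eigenvalues i ≤ ξc₁) :
    (2 : ℝ) ^ (1 + 1 / p) / (n : ℝ) *
        ((G.edgeFinset.card : ℝ) * (G.minDegree : ℝ) +
          ((n : ℝ) - 1 - (G.maxDegree : ℝ)) *
            ((n : ℝ) * ((n : ℝ) - 1) / 2 - (G.edgeFinset.card : ℝ))) ≤ ξ₁ + ξc₁ :=
  somborMatrix_nordhaus_gaddum_general n G hδ p hp hS hSc ξ₁ ξc₁ hξmax hξcmax
end
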